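/- Let R be a ring with local units, P a locally projective unitary left R-module, and S a subring of End_R(P) such that P is a unitary right S-module, S·End_R(P) = S, and Pf is a finitely generated left R-module for every idempotent f ∈ S. Set G_P = SHom_R(P,R). Then there is a natural transformation γ : id_{RMod} → RHom_S(G_P, SHom_R(P,−)) such that for each unitary left R-module M, the morphism SHom_R(P, γ_M) : SHom_R(P,M) → SHom_R(P, RHom_S(G_P, SHom_R(P,M))) is an S-module isomorphism, determining a functorial isomorphism SHom_R(P,−) ≅ SHom_R(P, RHom_S(G_P, SHom_R(P,−))). -/

import Mathlib

set_option linter.unusedVariables false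

/-! ### Core: non-unital rings with local units, modules, homomorphisms, categories -/

universe u v w

open MulOpposite CategoryTheory

/-- A ring with local units: every finite subset is contained in a subring
of the form `eRe` for an idempotent `e`; equivalently, every finite subset
admits an idempotent acting as a two-sided identity on it. -/
class HasLocalUnits (R : Type u) [NonUnitalRing R] : Prop where
  exists_unit : ∀ s : Finset R, ∃ e : R, e * e = e ∧ ∀ x ∈ s, e * x = x ∧ x * e = x

/-- A (left) module over a non-unital ring. -/
class LMod (R : Type u) [NonUnitalRing R] (M : Type v) [AddCommGroup M] extends SMul R M where
  smul_add' : ∀ (r : R) (m n : M), r • (m + n) = r • m + r • n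
  add_smul' : ∀ (r s : R) (m : M), (r + s) • m = r • m + s • m
  mul_smul' : ∀ (r s : R) (m : M), (r * s) • m = r • (s • m)

section basic
variable {R : Type u} [NonUnitalRing R] {M : Type v} [AddCommGroup M] [LMod R M]

theorem LMod.smul_zero' (r : R) : r • (0 : M) = 0 := by
  have h := LMod.smul_add' r (0 : M) 0
  rw [add_zero] at h
  have h2 : r • (0 : M) + r • (0 : M) = r • (0 : M) + 0 := by rw [← h, add_zero]
  exact add_left_cancel h2

theorem LMod.zero_smul' (m : M) : (0 : R) • m = 0 := by
  have h := LMod.add_smul' (0 : R) 0 m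
  rw [add_zero] at h
  have h2 : (0 : R) • m + (0 : R) • m = (0 : R) • m + 0 := by rw [← h, add_zero]
  exact add_left_cancel h2

theorem LMod.smul_neg' (r : R) (m : M) : r • (-m) = -(r • m) := by
  have h : r • m + r • (-m) = 0 := by
    rw [← LMod.smul_add' r m (-m), add_neg_cancel, LMod.smul_zero']
  exact eq_neg_of_add_eq_zero_right h

end basic

/-- `f : M → N` is a homomorphism of (non-unital) `R`-modules. -/
structure IsLHom (R : Type u) [NonUnitalRing R] {M : Type v} {N : Type w}
    [AddCommGroup M] [AddCommGroup N] [LMod R M] [LMod R N] (f : M → N) : Prop where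
  map_add : ∀ x y, f (x + y) = f x + f y
  map_smul : ∀ (r : R) (x : M), f (r • x) = r • f x

theorem IsLHom.map_zero {R : Type u} [NonUnitalRing R] {M : Type v} {N : Type w}
    [AddCommGroup M] [AddCommGroup N] [LMod R M] [LMod R N] {f : M → N}
    (hf : IsLHom R f) : f 0 = 0 := by
  have h := hf.map_add 0 0
  rw [add_zero] at h
  have h2 : f 0 + f 0 = f 0 + 0 := by rw [← h, add_zero]
  exact add_left_cancel h2

theorem IsLHom.map_neg {R : Type u} [NonUnitalRing R] {M : Type v} {N : Type w}
    [AddCommGroup M] [AddCommGroup N] [LMod R M] [LMod R N] {f : M → N}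
    (hf : IsLHom R f) (x : M) : f (-x) = -(f x) := by
  have h : f x + f (-x) = 0 := by rw [← hf.map_add, add_neg_cancel, hf.map_zero]
  exact eq_neg_of_add_eq_zero_right h

/-- The type of homomorphisms of (non-unital) `R`-modules. -/
def LinMap (R : Type u) [NonUnitalRing R] (M : Type v) (N : Type w)
    [AddCommGroup M] [AddCommGroup N] [LMod R M] [LMod R N] : Type (max v w) :=
  {f : M → N // IsLHom R f}

namespace LinMap

variable {R : Type u} [NonUnitalRing R] {M : Type v} {N : Type w}
    [AddCommGroup M] [AddCommGroup N] [LMod R M] [LMod R N]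

theorem ext {f g : LinMap R M N} (h : f.1 = g.1) : f = g := Subtype.ext h

instance : Add (LinMap R M N) :=
  ⟨fun f g => ⟨fun x => f.1 x + g.1 x,
    ⟨fun x y => by rw [f.2.map_add, g.2.map_add]; abel,
     fun r x => by rw [f.2.map_smul, g.2.map_smul, LMod.smul_add']⟩⟩⟩

instance : Zero (LinMap R M N) :=
  ⟨⟨fun _ => 0, ⟨fun _ _ => by rw [add_zero], fun r _ => (LMod.smul_zero' r).symm⟩⟩⟩

instance : Neg (LinMap R M N) :=
  ⟨fun f => ⟨fun x => -(f.1 x),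
    ⟨fun x y => by rw [f.2.map_add]; abel,
     fun r x => by rw [f.2.map_smul, LMod.smul_neg']⟩⟩⟩

instance : AddCommGroup (LinMap R M N) where
  add_assoc f g h := ext (funext fun x => add_assoc _ _ _)
  zero_add f := ext (funext fun x => zero_add _)
  add_zero f := ext (funext fun x => add_zero _)
  add_comm f g := ext (funext fun x => add_comm _ _)
  neg_add_cancel f := ext (funext fun x => neg_add_cancel _)
  nsmul := nsmulRec
  zsmul := zsmulRec

@[simp] theorem add_apply (f g : LinMap R M N) (x : M) : (f + g).1 x = f.1 x + g.1 x := rfl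
@[simp] theorem zero_apply (x : M) : (0 : LinMap R M N).1 x = 0 := rfl
@[simp] theorem neg_apply (f : LinMap R M N) (x : M) : (-f).1 x = -(f.1 x) := rfl

end LinMap

/-- The endomorphism ring of a module over a non-unital ring, with the
"diagrammatic" multiplication `(f * g) x = g (f x)` (i.e. `f * g` means
"first `f`, then `g`", matching homomorphisms written on the right). -/
instance LinMap.instNonUnitalRing {R : Type u} [NonUnitalRing R] {M : Type v}
    [AddCommGroup M] [LMod R M] : NonUnitalRing (LinMap R M M) :=
  { (inferInstance : AddCommGroup (LinMap R M M)) with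
    mul := fun f g => ⟨fun x => g.1 (f.1 x),
      ⟨fun x y => by rw [f.2.map_add, g.2.map_add], fun r x => by rw [f.2.map_smul, g.2.map_smul]⟩⟩
    left_distrib := fun f g h => LinMap.ext (funext fun x => rfl)
    right_distrib := fun f g h => LinMap.ext (funext fun x => h.2.map_add _ _)
    zero_mul := fun f => LinMap.ext (funext fun x => f.2.map_zero)
    mul_zero := fun f => LinMap.ext (funext fun x => rfl)
    mul_assoc := fun f g h => LinMap.ext (funext fun x => rfl) }

@[simp] theorem LinMap.mul_apply {R : Type u} [NonUnitalRing R] {M : Type v}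
    [AddCommGroup M] [LMod R M] (f g : LinMap R M M) (x : M) : (f * g).1 x = g.1 (f.1 x) := rfl

/-- A module `M` over a non-unital ring `R` is unitary if `RM = M`. -/
def IsUnitary (R : Type u) [NonUnitalRing R] (M : Type v) [AddCommGroup M] [LMod R M] : Prop :=
  ∀ m : M, m ∈ AddSubgroup.closure {x : M | ∃ (r : R) (n : M), x = r • n}

/-- The `R`-submodule (as an additive subgroup) generated by a subset. -/
def lspan (R : Type u) [NonUnitalRing R] {M : Type v} [AddCommGroup M] [LMod R M]
    (X : Set M) : AddSubgroup M :=
  AddSubgroup.closure (X ∪ {m | ∃ (r : R) (x : M), x ∈ X ∧ m = r • x})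

/-- A subset `A` of a module is finitely generated (as an `R`-submodule). -/
def IsFGSet (R : Type u) [NonUnitalRing R] {M : Type v} [AddCommGroup M] [LMod R M]
    (A : Set M) : Prop :=
  ∃ s : Finset M, (↑s : Set M) ⊆ A ∧ ∀ a ∈ A, a ∈ lspan R (↑s : Set M)

/-- A finitely generated module over a non-unital ring. -/
def IsFG (R : Type u) [NonUnitalRing R] (M : Type v) [AddCommGroup M] [LMod R M] : Prop :=
  ∃ s : Finset M, ∀ m : M, m ∈ lspan R (↑s : Set M)

/-- The category of unitary left modules over a ring with local units
(objects: unitary left `R`-modules). -/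
structure UMod (R : Type u) [NonUnitalRing R] : Type (max u (v + 1)) where
  carrier : Type v
  [grp : AddCommGroup carrier]
  [mod : LMod R carrier]
  unitary : IsUnitary R carrier

attribute [instance] UMod.grp UMod.mod

instance {R : Type u} [NonUnitalRing R] : CoeSort (UMod.{u, v} R) (Type v) := ⟨UMod.carrier⟩

instance UMod.instCategory {R : Type u} [NonUnitalRing R] : Category (UMod.{u, v} R) where
  Hom M N := LinMap R M.carrier N.carrier
  id M := ⟨fun x => x, ⟨fun _ _ => rfl, fun _ _ => rfl⟩⟩
  comp f g := ⟨fun x => g.1 (f.1 x),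
    ⟨fun x y => by rw [f.2.map_add, g.2.map_add], fun r x => by rw [f.2.map_smul, g.2.map_smul]⟩⟩
  id_comp f := LinMap.ext rfl
  comp_id f := LinMap.ext rfl
  assoc f g h := LinMap.ext rfl

@[simp] theorem UMod.comp_apply {R : Type u} [NonUnitalRing R] {M N K : UMod.{u, v} R}
    (f : M ⟶ N) (g : N ⟶ K) (x : M.carrier) : (f ≫ g).1 x = g.1 (f.1 x) := rfl

@[simp] theorem UMod.id_apply {R : Type u} [NonUnitalRing R] {M : UMod.{u, v} R}
    (x : M.carrier) : (𝟙 M : M ⟶ M).1 x = x := rfl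

instance UMod.instPreadditive {R : Type u} [NonUnitalRing R] :
    Preadditive (UMod.{u, v} R) where
  homGroup M N := inferInstanceAs (AddCommGroup (LinMap R M.carrier N.carrier))
  add_comp M N K f f' g := LinMap.ext (funext fun x => g.2.map_add _ _)
  comp_add M N K f g g' := LinMap.ext (funext fun x => rfl)

/-- A unitary module `P` is a generator of the category of unitary left `R`-modules. -/
def IsGenerator (R : Type u) [NonUnitalRing R] (P : UMod.{u, v} R) : Prop :=
  ∀ (M B : UMod.{u, v} R) (f g : M ⟶ B), f ≠ g → ∃ h : P ⟶ M, h ≫ f ≠ h ≫ g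

/-- A set of unitary modules is a cogenerating set for the category of
unitary left `R`-modules. -/
def IsCogenSet (R : Type u) [NonUnitalRing R] (𝒰 : Set (UMod.{u, v} R)) : Prop :=
  ∀ (B M : UMod.{u, v} R) (f g : B ⟶ M), f ≠ g → ∃ U' ∈ 𝒰, ∃ h : M ⟶ U', f ≫ h ≠ g ≫ h
/-! ### The largest unitary submodule `C·H` of a module `H`, and induced
module structures on hom-groups -/

section umax

variable (C : Type u) [NonUnitalRing C] (H : Type v) [AddCommGroup H] [LMod C H]

/-- `C·H`, the largest unitary `C`-submodule of the `C`-module `H`. -/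
def umax : AddSubgroup H :=
  AddSubgroup.closure {h : H | ∃ (c : C) (h' : H), h = c • h'}

variable {C H}

theorem smul_mem_umax (c : C) (h : H) : c • h ∈ umax C H :=
  AddSubgroup.subset_closure ⟨c, h, rfl⟩

/-- An additive, `C`-equivariant map carries `C·H` into `C·H'`. -/
theorem umax_mapsTo {H' : Type w} [AddCommGroup H'] [LMod C H'] (T : H → H')
    (hadd : ∀ x y, T (x + y) = T x + T y) (hsmul : ∀ (c : C) (x : H), T (c • x) = c • T x)
    {h : H} (hh : h ∈ umax C H) : T h ∈ umax C H' := by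
  have hT : IsLHom C T := ⟨hadd, hsmul⟩
  induction hh using AddSubgroup.closure_induction with
  | mem x hx =>
    obtain ⟨c, h', rfl⟩ := hx
    rw [hsmul]; exact smul_mem_umax c (T h')
  | zero => rw [hT.map_zero]; exact (umax C H').zero_mem
  | add x y hx hy ihx ihy => rw [hadd]; exact (umax C H').add_mem ihx ihy
  | neg x hx ihx => rw [hT.map_neg]; exact (umax C H').neg_mem ihx

instance umax.instLMod : LMod C ↥(umax C H) where
  smul c h := ⟨c • h.1, smul_mem_umax c h.1⟩
  smul_add' c m n := Subtype.ext (LMod.smul_add' c m.1 n.1)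
  add_smul' c c' m := Subtype.ext (LMod.add_smul' c c' m.1)
  mul_smul' c c' m := Subtype.ext (LMod.mul_smul' c c' m.1)

@[simp] theorem umax.smul_coe (c : C) (h : ↥(umax C H)) : (c • h).1 = c • h.1 := rfl

/-- If a second ring `D` acts on `H` commuting with the `C`-action,
then `C·H` is stable under the `D`-action. -/
theorem umax_stable {D : Type w} [NonUnitalRing D] [LMod D H] [SMulCommClass C D H]
    (d : D) {h : H} (hh : h ∈ umax C H) : d • h ∈ umax C H :=
  umax_mapsTo (fun x => d • x) (fun x y => LMod.smul_add' d x y)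
    (fun c x => (smul_comm c d x).symm) hh

instance umax.instLMod₂ {D : Type w} [NonUnitalRing D] [LMod D H] [SMulCommClass C D H] :
    LMod D ↥(umax C H) where
  smul d h := ⟨d • h.1, umax_stable d h.2⟩
  smul_add' d m n := Subtype.ext (LMod.smul_add' d m.1 n.1)
  add_smul' d d' m := Subtype.ext (LMod.add_smul' d d' m.1)
  mul_smul' d d' m := Subtype.ext (LMod.mul_smul' d d' m.1)

instance umax.instSMulCommClass {D : Type w} [NonUnitalRing D] [LMod D H]
    [SMulCommClass C D H] : SMulCommClass C D ↥(umax C H) :=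
  ⟨fun c d h => Subtype.ext (smul_comm c d h.1)⟩

/-- If `C` has local units, then `C·H` is a unitary `C`-module. -/
theorem umax_unitary [HasLocalUnits C] : IsUnitary C ↥(umax C H) := by
  intro m
  obtain ⟨h, hh⟩ := m
  induction hh using AddSubgroup.closure_induction with
  | mem x hx =>
    obtain ⟨c, h', rfl⟩ := hx
    obtain ⟨e, he, hec⟩ := HasLocalUnits.exists_unit {c}
    have hc := (hec c (Finset.mem_singleton_self c)).1
    refine AddSubgroup.subset_closure ⟨e, ⟨c • h', smul_mem_umax c h'⟩, ?_⟩
    refine Subtype.ext ?_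
    show c • h' = e • (c • h')
    rw [← LMod.mul_smul', hc]
  | zero =>
    have : (⟨(0 : H), (umax C H).zero_mem⟩ : ↥(umax C H)) = 0 := rfl
    rw [this]; exact AddSubgroup.zero_mem _
  | add x y hx hy ihx ihy =>
    have : (⟨x + y, (umax C H).add_mem hx hy⟩ : ↥(umax C H)) =
        ⟨x, hx⟩ + ⟨y, hy⟩ := rfl
    rw [this]; exact AddSubgroup.add_mem _ ihx ihy
  | neg x hx ihx =>
    have : (⟨-x, (umax C H).neg_mem hx⟩ : ↥(umax C H)) = -⟨x, hx⟩ := rfl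
    rw [this]; exact AddSubgroup.neg_mem _ ihx

end umax

section regular

variable (R : Type u) [NonUnitalRing R]

/-- The left regular module structure of a non-unital ring on itself. -/
instance NonUnitalRing.instLModSelf : LMod R R where
  smul := (· * ·)
  smul_add' := mul_add
  add_smul' := add_mul
  mul_smul' := mul_assoc

@[simp] theorem NonUnitalRing.smul_def (r s : R) : r • s = r * s := rfl

/-- The right regular module structure, as a left module over the opposite ring. -/
instance NonUnitalRing.instLModSelfOp : LMod Rᵐᵒᵖ R where
  smul r s := s * r.unop
  smul_add' r m n := add_mul m n r.unop
  add_smul' r r' m := mul_add m r.unop r'.unop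
  mul_smul' r r' m := (mul_assoc m r'.unop r.unop).symm

@[simp] theorem NonUnitalRing.op_smul_def (r : Rᵐᵒᵖ) (s : R) : r • s = s * r.unop := rfl

instance : SMulCommClass R Rᵐᵒᵖ R :=
  ⟨fun r s x => by
    show r * (x * s.unop) = (r * x) * s.unop
    rw [mul_assoc]⟩

/-- Local units pass to the opposite ring. -/
instance instHasLocalUnitsOp [HasLocalUnits R] : HasLocalUnits Rᵐᵒᵖ where
  exists_unit s := by
    classical
    obtain ⟨e, he, h⟩ := HasLocalUnits.exists_unit (R := R) (s.image MulOpposite.unop)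
    refine ⟨MulOpposite.op e, by rw [← MulOpposite.op_mul, he], fun x hx => ?_⟩
    have hx' := h x.unop (Finset.mem_image_of_mem MulOpposite.unop hx)
    constructor
    · conv_lhs => rw [← MulOpposite.op_unop x, ← MulOpposite.op_mul, hx'.2, MulOpposite.op_unop]
    · conv_lhs => rw [← MulOpposite.op_unop x, ← MulOpposite.op_mul, hx'.1, MulOpposite.op_unop]

end regular

section homact

variable {A B C : Type u} [NonUnitalRing A] [NonUnitalRing B] [NonUnitalRing C]
variable {X : Type v} {Y : Type w} [AddCommGroup X] [AddCommGroup Y] [LMod B X] [LMod B Y]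

/-- The action of `A` on `Hom_B(X, Y)` by precomposition with the right
`A`-action on `X` (homomorphisms written on the right: `(a • f) x = f (x·a)`). -/
instance LinMap.instLModPre [LMod Aᵐᵒᵖ X] [SMulCommClass B Aᵐᵒᵖ X] :
    LMod A (LinMap B X Y) where
  smul a f := ⟨fun x => f.1 (op a • x),
    ⟨fun x y => by rw [LMod.smul_add', f.2.map_add],
     fun r x => by rw [← smul_comm r (op a) x, f.2.map_smul]⟩⟩
  smul_add' a f g := LinMap.ext rfl
  add_smul' a a' f := LinMap.ext (funext fun x => by
    show f.1 (op (a + a') • x) = f.1 (op a • x) + f.1 (op a' • x)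
    rw [← f.2.map_add, ← LMod.add_smul']
    rfl)
  mul_smul' a a' f := LinMap.ext (funext fun x => by
    show f.1 (op (a * a') • x) = f.1 (op a' • (op a • x))
    rw [← LMod.mul_smul']
    rfl)

theorem LinMap.pre_smul_apply [LMod Aᵐᵒᵖ X] [SMulCommClass B Aᵐᵒᵖ X]
    (a : A) (f : LinMap B X Y) (x : X) : (a • f).1 x = f.1 (op a • x) := rfl

/-- The action of `C` on `Hom_B(X, Y)` by postcomposition with a commuting
`C`-action on `Y`. -/
instance LinMap.instLModPost [LMod C Y] [SMulCommClass B C Y] :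
    LMod C (LinMap B X Y) where
  smul c f := ⟨fun x => c • f.1 x,
    ⟨fun x y => by rw [f.2.map_add, LMod.smul_add'],
     fun r x => by rw [f.2.map_smul]; exact (smul_comm r c (f.1 x)).symm⟩⟩
  smul_add' c f g := LinMap.ext (funext fun x => LMod.smul_add' c (f.1 x) (g.1 x))
  add_smul' c c' f := LinMap.ext (funext fun x => LMod.add_smul' c c' (f.1 x))
  mul_smul' c c' f := LinMap.ext (funext fun x => LMod.mul_smul' c c' (f.1 x))

theorem LinMap.post_smul_apply [LMod C Y] [SMulCommClass B C Y]
    (c : C) (f : LinMap B X Y) (x : X) : (c • f).1 x = c • (f.1 x) := rfl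

/-- Pre- and postcomposition actions on hom-groups commute. -/
instance LinMap.instSMulCommClassPrePost [LMod Aᵐᵒᵖ X] [SMulCommClass B Aᵐᵒᵖ X]
    [LMod C Y] [SMulCommClass B C Y] : SMulCommClass A C (LinMap B X Y) :=
  ⟨fun a c f => LinMap.ext rfl⟩

end homact
/-! ### Split direct systems and direct limits of unitary modules -/

section dirsys

variable (R : Type u) [NonUnitalRing R]

/-- A split direct system of unitary left `R`-modules, indexed by a
quasi-ordered set `(ι, rel)`: a direct system `(P_i, φ_{ij})` together with
splittings `ψ_{ji} : P_j → P_i` (for `i ≤ j`) such that `φ_{ij} ψ_{ji} = id`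
and `ψ_{kj} ψ_{ji} = ψ_{ki}`. -/
structure SplitSystem (ι : Type w) (rel : ι → ι → Prop) : Type (max u w (v + 1)) where
  obj : ι → UMod.{u, v} R
  map : ∀ {i j : ι}, rel i j → (obj i ⟶ obj j)
  split : ∀ {i j : ι}, rel i j → (obj j ⟶ obj i)
  map_self : ∀ {i : ι} (h : rel i i) (x : (obj i).carrier), (map h).1 x = x
  map_map : ∀ {i j k : ι} (hij : rel i j) (hjk : rel j k) (hik : rel i k)
    (x : (obj i).carrier), (map hjk).1 ((map hij).1 x) = (map hik).1 x
  split_map : ∀ {i j : ι} (h : rel i j) (x : (obj i).carrier),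
    (split h).1 ((map h).1 x) = x
  split_split : ∀ {i j k : ι} (hij : rel i j) (hjk : rel j k) (hik : rel i k)
    (x : (obj k).carrier), (split hij).1 ((split hjk).1 x) = (split hik).1 x

/-- `P`, together with homomorphisms `φ_i : P_i → P`, is a direct limit of the
direct system `(P_i, φ_{ij})` (with directed index set): the `φ_i` are
compatible, every element of `P` comes from some `P_i`, and everything killed
by `φ_i` is eventually killed in the system. -/
structure LimitCocone {ι : Type w} {rel : ι → ι → Prop} (D : SplitSystem.{u, v} R ι rel)
    (P : Type v) [AddCommGroup P] [LMod R P] : Type (max u w v) where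
  incl : ∀ i, LinMap R (D.obj i).carrier P
  compat : ∀ {i j : ι} (h : rel i j) (x : (D.obj i).carrier),
    (incl j).1 ((D.map h).1 x) = (incl i).1 x
  exhaustive : ∀ x : P, ∃ (i : ι) (y : (D.obj i).carrier), (incl i).1 y = x
  eventually_zero : ∀ i (y : (D.obj i).carrier), (incl i).1 y = 0 →
    ∃ j, ∃ h : rel i j, (D.map h).1 y = 0

/-- A unitary left `R`-module is locally projective if it is a direct limit of a
split direct system of finitely generated projective unitary left `R`-modules. -/
def IsLocallyProjective (P : Type v) [AddCommGroup P] [LMod R P] : Prop :=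
  ∃ (ι : Type v) (rel : ι → ι → Prop),
    (∀ i, rel i i) ∧ (∀ {i j k}, rel i j → rel j k → rel i k) ∧
    Nonempty ι ∧ (∀ i j, ∃ k, rel i k ∧ rel j k) ∧
    ∃ (D : SplitSystem.{u, v} R ι rel) (_ : LimitCocone R D P),
      ∀ i, IsFG R (D.obj i).carrier ∧ CategoryTheory.Projective (D.obj i)

variable {R}

/-- The transition maps `Ω_{ij} : End_R(P_i) → End_R(P_j)`, `α ↦ ψ_{ji} α φ_{ij}`,
of the direct system of endomorphism rings associated to a split direct system. -/
def SplitSystem.endTrans {ι : Type w} {rel : ι → ι → Prop}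
    (D : SplitSystem.{u, v} R ι rel) {i j : ι} (h : rel i j)
    (a : LinMap R (D.obj i).carrier (D.obj i).carrier) :
    LinMap R (D.obj j).carrier (D.obj j).carrier :=
  ⟨fun x => (D.map h).1 (a.1 ((D.split h).1 x)),
   ⟨fun x y => by rw [(D.split h).2.map_add, a.2.map_add, (D.map h).2.map_add],
    fun r x => by rw [(D.split h).2.map_smul, a.2.map_smul, (D.map h).2.map_smul]⟩⟩

end dirsys
/-! ### The functor `SHom_R(P,−)` and related constructions for a bimodule `P` -/

section shom

variable (R S : Type u) [NonUnitalRing R] [NonUnitalRing S]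
variable (P : Type u) [AddCommGroup P] [LMod R P] [LMod Sᵐᵒᵖ P] [SMulCommClass R Sᵐᵒᵖ P]

/-- `SHom_R(P,M) = S·Hom_R(P,M)`, the largest unitary left `S`-submodule of
`Hom_R(P,M)`, as a type. -/
abbrev SHom (M : Type u) [AddCommGroup M] [LMod R M] : Type u :=
  ↥(umax S (LinMap R P M))

variable {R S P}

/-- The action of `SHom_R(P,−)` on a homomorphism `g : M → N` (postcomposition). -/
def sHomMap {M N : Type u} [AddCommGroup M] [AddCommGroup N] [LMod R M] [LMod R N]
    (g : LinMap R M N) (α : SHom R S P M) : SHom R S P N :=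
  ⟨⟨fun x => g.1 (α.1.1 x),
    ⟨fun x y => by rw [α.1.2.map_add, g.2.map_add],
     fun r x => by rw [α.1.2.map_smul, g.2.map_smul]⟩⟩,
   umax_mapsTo (C := S)
     (fun f => ⟨fun x => g.1 (f.1 x),
       ⟨fun x y => by rw [f.2.map_add, g.2.map_add],
        fun r x => by rw [f.2.map_smul, g.2.map_smul]⟩⟩)
     (fun f f' => LinMap.ext (funext fun x => g.2.map_add _ _))
     (fun s f => LinMap.ext rfl) α.2⟩

theorem sHomMap_apply {M N : Type u} [AddCommGroup M] [AddCommGroup N] [LMod R M]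
    [LMod R N] (g : LinMap R M N) (α : SHom R S P M) (x : P) :
    ((sHomMap g α).1).1 x = g.1 (α.1.1 x) := rfl

theorem sHomMap_add {M N : Type u} [AddCommGroup M] [AddCommGroup N] [LMod R M]
    [LMod R N] (g : LinMap R M N) (α β : SHom R S P M) :
    sHomMap g (α + β) = sHomMap g α + sHomMap g β :=
  Subtype.ext (LinMap.ext (funext fun x =>
    show g.1 (α.1.1 x + β.1.1 x) = g.1 (α.1.1 x) + g.1 (β.1.1 x) from g.2.map_add _ _))

theorem sHomMap_smul {M N : Type u} [AddCommGroup M] [AddCommGroup N] [LMod R M]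
    [LMod R N] (g : LinMap R M N) (s : S) (α : SHom R S P M) :
    sHomMap g (s • α) = s • sHomMap g α :=
  Subtype.ext (LinMap.ext (funext fun x => rfl))

/-- `SHom_R(P,g)` as a homomorphism of `S`-modules. -/
def sHomLin {M N : Type u} [AddCommGroup M] [AddCommGroup N] [LMod R M] [LMod R N]
    (g : LinMap R M N) : LinMap S (SHom R S P M) (SHom R S P N) :=
  ⟨sHomMap g, ⟨sHomMap_add g, fun s α => sHomMap_smul g s α⟩⟩

variable (R S P)

/-- The functor `SHom_R(P,−)` from unitary left `R`-modules to unitary left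
`S`-modules. -/
def sHomF [HasLocalUnits S] : UMod.{u, u} R ⥤ UMod.{u, u} S where
  obj M := ⟨SHom R S P M.carrier, umax_unitary⟩
  map g := sHomLin g
  map_id M := LinMap.ext (funext fun α => Subtype.ext (LinMap.ext (funext fun x => rfl)))
  map_comp f g := LinMap.ext (funext fun α => Subtype.ext (LinMap.ext (funext fun x => rfl)))

/-- `G_P = SHom_R(P,R)`, an `S`-`R`-bimodule. -/
abbrev GP : Type u := ↥(umax S (LinMap R P R))

/-- `RHom_S(G_P, N) = R·Hom_S(G_P, N)`, as a type. -/
abbrev RHomG (N : Type u) [AddCommGroup N] [LMod S N] : Type u :=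
  ↥(umax R (LinMap S (GP R S P) N))

variable {R S P}

/-- The action of `RHom_S(G_P,−)` on a homomorphism of `S`-modules. -/
def rHomGMap {N N' : Type u} [AddCommGroup N] [AddCommGroup N'] [LMod S N] [LMod S N']
    (g : LinMap S N N') (α : RHomG R S P N) : RHomG R S P N' :=
  ⟨⟨fun β => g.1 (α.1.1 β),
    ⟨fun x y => by rw [α.1.2.map_add, g.2.map_add],
     fun s x => by rw [α.1.2.map_smul, g.2.map_smul]⟩⟩,
   umax_mapsTo (C := R)
     (fun f => ⟨fun β => g.1 (f.1 β),
       ⟨fun x y => by rw [f.2.map_add, g.2.map_add],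
        fun s x => by rw [f.2.map_smul, g.2.map_smul]⟩⟩)
     (fun f f' => LinMap.ext (funext fun β => g.2.map_add _ _))
     (fun r f => LinMap.ext rfl) α.2⟩

variable (R S P)

/-- The functor `RHom_S(G_P,−)` from unitary left `S`-modules to unitary left
`R`-modules. -/
def rHomGF [HasLocalUnits R] : UMod.{u, u} S ⥤ UMod.{u, u} R where
  obj N := ⟨RHomG R S P N.carrier, umax_unitary⟩
  map g := ⟨rHomGMap g,
    ⟨fun α β => Subtype.ext (LinMap.ext (funext fun x =>
       show g.1 (α.1.1 x + β.1.1 x) = g.1 (α.1.1 x) + g.1 (β.1.1 x) from g.2.map_add _ _)),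
     fun r α => Subtype.ext (LinMap.ext (funext fun x => rfl))⟩⟩
  map_id N := LinMap.ext (funext fun α => Subtype.ext (LinMap.ext (funext fun x => rfl)))
  map_comp f g := LinMap.ext (funext fun α => Subtype.ext (LinMap.ext (funext fun x => rfl)))

variable {R S P}

/-- The inner component of the evaluation map `γ`: for `n ∈ N` and
`β ∈ Hom_R(P,R)`, the homomorphism `P → N`, `x ↦ (x)β·n`. -/
def gammaInner {N : Type u} [AddCommGroup N] [LMod R N] (n : N) (β : LinMap R P R) :
    LinMap R P N :=
  ⟨fun x => (β.1 x) • n,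
   ⟨fun x y => by rw [β.2.map_add, LMod.add_smul'],
    fun r x => by rw [β.2.map_smul, NonUnitalRing.smul_def, LMod.mul_smul']⟩⟩

theorem gammaInner_mem {N : Type u} [AddCommGroup N] [LMod R N] (n : N)
    {β : LinMap R P R} (hβ : β ∈ umax S (LinMap R P R)) :
    gammaInner n β ∈ umax S (LinMap R P N) :=
  umax_mapsTo (C := S) (fun β => gammaInner n β)
    (fun β β' => LinMap.ext (funext fun x => LMod.add_smul' _ _ _))
    (fun s β => LinMap.ext rfl) hβ

variable (R S P)

/-- The evaluation map `γ_N : N → RHom_S(G_P, SHom_R(P,N))` (before checking that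
its values lie in the unitary part `R·Hom_S(G_P, SHom_R(P,N))`):
`n ↦ (β ↦ (x ↦ (x)β·n))`. -/
def gammaFun (N : Type u) [AddCommGroup N] [LMod R N] (n : N) :
    LinMap S (GP R S P) (SHom R S P N) :=
  ⟨fun β => ⟨gammaInner n β.1, gammaInner_mem n β.2⟩,
   ⟨fun β β' => Subtype.ext (LinMap.ext (funext fun x => LMod.add_smul' _ _ _)),
    fun s β => Subtype.ext (LinMap.ext rfl)⟩⟩

/-- The `s`-trace `sTr(P,M) = Σ_{g ∈ SHom_R(P,M)} Im g` of `P` in `M`. -/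
def sTrSub (M : Type u) [AddCommGroup M] [LMod R M] : AddSubgroup M :=
  AddSubgroup.closure {m : M | ∃ f : LinMap R P M, f ∈ umax S (LinMap R P M) ∧ ∃ x : P, m = f.1 x}

/-- `st_P(M) = 0`: the only `R`-submodule `K ⊆ M` with `SHom_R(P,K) = 0` is the
zero submodule (equivalently, the sum of all such submodules is zero). -/
def stPZero (M : Type u) [AddCommGroup M] [LMod R M] : Prop :=
  ∀ K : AddSubgroup M, (∀ (r : R) (x : M), x ∈ K → r • x ∈ K) →
    (∀ (s : S) (f : LinMap R P M), (∀ x : P, f.1 x ∈ K) → s • f = 0) →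
    ∀ m ∈ K, m = 0

/-- `SHom_R(P,X) = 0`. -/
def sHomZero (X : Type u) [AddCommGroup X] [LMod R X] : Prop :=
  ∀ f : LinMap R P X, f ∈ umax S (LinMap R P X) → f = 0

end shom
/-! ### Bimodules, dual hom functors, reflexivity, Morita duality bimodules,
finiteness conditions -/

section bimod

variable (R S : Type u) [NonUnitalRing R] [NonUnitalRing S]

/-- A bundled `R`-`S`-bimodule over non-unital rings. -/
structure BimodLU : Type (u + 1) where
  carrier : Type u
  [grp : AddCommGroup carrier]
  [lmod : LMod R carrier]
  [rmod : LMod Sᵐᵒᵖ carrier]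
  [comm : SMulCommClass R Sᵐᵒᵖ carrier]
  [comm' : SMulCommClass Sᵐᵒᵖ R carrier]

attribute [instance] BimodLU.grp BimodLU.lmod BimodLU.rmod BimodLU.comm BimodLU.comm'

variable (U : Type u) [AddCommGroup U] [LMod R U] [LMod Sᵐᵒᵖ U] [SMulCommClass R Sᵐᵒᵖ U]
  [SMulCommClass Sᵐᵒᵖ R U]

/-- The canonical map `μ : S → End_R(U)`, `s ↦ (x ↦ x·s)`. -/
def muMap (s : S) : LinMap R U U :=
  ⟨fun x => op s • x,
   ⟨fun x y => LMod.smul_add' (op s) x y, fun r x => (smul_comm r (op s) x).symm⟩⟩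

/-- The canonical map `λ : R → End_S(U)`, `r ↦ (x ↦ r·x)`. -/
def lambdaMap (r : R) : LinMap Sᵐᵒᵖ U U :=
  ⟨fun x => r • x,
   ⟨fun x y => LMod.smul_add' r x y, fun s x => smul_comm r s x⟩⟩

/-- `Hom_R(M,U)S`, the largest unitary right `S`-submodule of `Hom_R(M,U)`,
as a type (a right `S`-module, i.e. a left `Sᵐᵒᵖ`-module). -/
abbrev DHomL (M : Type u) [AddCommGroup M] [LMod R M] : Type u :=
  ↥(umax Sᵐᵒᵖ (LinMap R M U))

/-- `RHom_S(N,U)`, the largest unitary left `R`-submodule of `Hom_S(N,U)`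
for a right `S`-module `N`, as a type. -/
abbrev DHomR (N : Type u) [AddCommGroup N] [LMod Sᵐᵒᵖ N] : Type u :=
  ↥(umax R (LinMap Sᵐᵒᵖ N U))

variable {R S U}

/-- Action of the contravariant functor `Hom_R(−,U)S` on morphisms
(precomposition). -/
def dHomLMap {M N : Type u} [AddCommGroup M] [AddCommGroup N] [LMod R M] [LMod R N]
    (f : LinMap R M N) (α : DHomL R S U N) : DHomL R S U M :=
  ⟨⟨fun x => α.1.1 (f.1 x),
    ⟨fun x y => by rw [f.2.map_add, α.1.2.map_add],
     fun r x => by rw [f.2.map_smul, α.1.2.map_smul]⟩⟩,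
   umax_mapsTo (C := Sᵐᵒᵖ)
     (fun g => ⟨fun x => g.1 (f.1 x),
       ⟨fun x y => by rw [f.2.map_add, g.2.map_add],
        fun r x => by rw [f.2.map_smul, g.2.map_smul]⟩⟩)
     (fun g g' => LinMap.ext rfl) (fun s g => LinMap.ext rfl) α.2⟩

/-- Action of the contravariant functor `RHom_S(−,U)` on morphisms
(precomposition). -/
def dHomRMap {M N : Type u} [AddCommGroup M] [AddCommGroup N] [LMod Sᵐᵒᵖ M]
    [LMod Sᵐᵒᵖ N] (f : LinMap Sᵐᵒᵖ M N) (α : DHomR R S U N) : DHomR R S U M :=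
  ⟨⟨fun x => α.1.1 (f.1 x),
    ⟨fun x y => by rw [f.2.map_add, α.1.2.map_add],
     fun s x => by rw [f.2.map_smul, α.1.2.map_smul]⟩⟩,
   umax_mapsTo (C := R)
     (fun g => ⟨fun x => g.1 (f.1 x),
       ⟨fun x y => by rw [f.2.map_add, g.2.map_add],
        fun s x => by rw [f.2.map_smul, g.2.map_smul]⟩⟩)
     (fun g g' => LinMap.ext rfl) (fun r g => LinMap.ext rfl) α.2⟩

variable (R S U)

/-- The contravariant functor `Hom_R(−,U)S` from unitary left `R`-modules to
unitary right `S`-modules. -/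
def dualL [HasLocalUnits S] : (UMod.{u, u} R)ᵒᵖ ⥤ UMod.{u, u} Sᵐᵒᵖ where
  obj M := ⟨DHomL R S U M.unop.carrier, umax_unitary⟩
  map f := ⟨dHomLMap f.unop,
    ⟨fun α β => Subtype.ext (LinMap.ext (funext fun x => rfl)),
     fun s α => Subtype.ext (LinMap.ext (funext fun x => rfl))⟩⟩
  map_id M := LinMap.ext (funext fun α => Subtype.ext (LinMap.ext (funext fun x => rfl)))
  map_comp f g := LinMap.ext (funext fun α => Subtype.ext (LinMap.ext (funext fun x => rfl)))

/-- The contravariant functor `RHom_S(−,U)` from unitary right `S`-modules to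
unitary left `R`-modules. -/
def dualR [HasLocalUnits R] : (UMod.{u, u} Sᵐᵒᵖ)ᵒᵖ ⥤ UMod.{u, u} R where
  obj N := ⟨DHomR R S U N.unop.carrier, umax_unitary⟩
  map f := ⟨dHomRMap f.unop,
    ⟨fun α β => Subtype.ext (LinMap.ext (funext fun x => rfl)),
     fun r α => Subtype.ext (LinMap.ext (funext fun x => rfl))⟩⟩
  map_id N := LinMap.ext (funext fun α => Subtype.ext (LinMap.ext (funext fun x => rfl)))
  map_comp f g := LinMap.ext (funext fun α => Subtype.ext (LinMap.ext (funext fun x => rfl)))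

/-- The underlying function of the evaluation map
`φ_X : X → RHom_S(Hom_R(X,U)S, U)`, `(x)φ_X : β ↦ (x)β`. -/
def evalFunL (X : Type u) [AddCommGroup X] [LMod R X] (x : X) :
    LinMap Sᵐᵒᵖ (DHomL R S U X) U :=
  ⟨fun β => β.1.1 x, ⟨fun β β' => rfl, fun s β => rfl⟩⟩

/-- A unitary left `R`-module `X` is `U`-reflexive: the evaluation map
`φ_X : X → RHom_S(Hom_R(X,U)S, U)` is an isomorphism. -/
def IsLReflexive (X : Type u) [AddCommGroup X] [LMod R X] : Prop :=
  ∃ h : ∀ x : X, evalFunL R S U X x ∈ umax R (LinMap Sᵐᵒᵖ (DHomL R S U X) U),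
    Function.Bijective (fun x : X => (⟨evalFunL R S U X x, h x⟩ : DHomR R S U (DHomL R S U X)))

/-- The underlying function of the evaluation map
`ψ_Y : Y → Hom_R(RHom_S(Y,U),U)S`, `ψ_Y(y) : α ↦ α(y)`. -/
def evalFunR (Y : Type u) [AddCommGroup Y] [LMod Sᵐᵒᵖ Y] (y : Y) :
    LinMap R (DHomR R S U Y) U :=
  ⟨fun α => α.1.1 y, ⟨fun α α' => rfl, fun r α => rfl⟩⟩

/-- A unitary right `S`-module `Y` is `U`-reflexive: the evaluation map
`ψ_Y : Y → Hom_R(RHom_S(Y,U),U)S` is an isomorphism. -/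
def IsRReflexive (Y : Type u) [AddCommGroup Y] [LMod Sᵐᵒᵖ Y] : Prop :=
  ∃ h : ∀ y : Y, evalFunR R S U Y y ∈ umax Sᵐᵒᵖ (LinMap R (DHomR R S U Y) U),
    Function.Bijective (fun y : Y => (⟨evalFunR R S U Y y, h y⟩ : DHomL R S U (DHomR R S U Y)))

/-- Properties (I) and (II) of a Morita duality bimodule: `U` is the direct
limit of a split direct system of finitely generated injective unitary left
`R`-modules whose members form a cogenerating set for the category of unitary
left `R`-modules, and `μ : S → End_R(U)` is a monomorphism whose image is
exactly the set of endomorphisms factoring through one of the induced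
projections. -/
def SatisfiesI_II : Prop :=
  ∃ (ι : Type u) (rel : ι → ι → Prop),
    (∀ i, rel i i) ∧ (∀ {i j k}, rel i j → rel j k → rel i k) ∧
    Nonempty ι ∧ (∀ i j, ∃ k, rel i k ∧ rel j k) ∧
    ∃ (D : SplitSystem.{u, u} R ι rel) (c : LimitCocone R D U)
      (proj : ∀ i, LinMap R U (D.obj i).carrier),
      (∀ i, IsFG R (D.obj i).carrier ∧ CategoryTheory.Injective (D.obj i)) ∧
      IsCogenSet R {M | ∃ i, M = D.obj i} ∧
      (∀ i (x : (D.obj i).carrier), (proj i).1 ((c.incl i).1 x) = x) ∧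
      (∀ {i j} (h : rel i j) (x : U), (D.split h).1 ((proj j).1 x) = (proj i).1 x) ∧
      Function.Injective (muMap R S U) ∧
      Set.range (muMap R S U) =
        {g : LinMap R U U | ∃ (i : ι) (γ : LinMap R (D.obj i).carrier U),
          g.1 = fun x => γ.1 ((proj i).1 x)}

/-- Properties (III) and (IV) of a Morita duality bimodule (the right-module
side, dual to (I) and (II)). -/
def SatisfiesIII_IV : Prop :=
  ∃ (ι : Type u) (rel : ι → ι → Prop),
    (∀ i, rel i i) ∧ (∀ {i j k}, rel i j → rel j k → rel i k) ∧
    Nonempty ι ∧ (∀ i j, ∃ k, rel i k ∧ rel j k) ∧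
    ∃ (D : SplitSystem.{u, u} Sᵐᵒᵖ ι rel) (c : LimitCocone Sᵐᵒᵖ D U)
      (proj : ∀ i, LinMap Sᵐᵒᵖ U (D.obj i).carrier),
      (∀ i, IsFG Sᵐᵒᵖ (D.obj i).carrier ∧ CategoryTheory.Injective (D.obj i)) ∧
      IsCogenSet Sᵐᵒᵖ {M | ∃ i, M = D.obj i} ∧
      (∀ i (x : (D.obj i).carrier), (proj i).1 ((c.incl i).1 x) = x) ∧
      (∀ {i j} (h : rel i j) (x : U), (D.split h).1 ((proj j).1 x) = (proj i).1 x) ∧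
      Function.Injective (lambdaMap R S U) ∧
      Set.range (lambdaMap R S U) =
        {g : LinMap Sᵐᵒᵖ U U | ∃ (i : ι) (γ : LinMap Sᵐᵒᵖ (D.obj i).carrier U),
          g.1 = fun x => γ.1 ((proj i).1 x)}

/-- A Morita duality `R`-`S`-bimodule. -/
def IsMoritaDualityBimod : Prop :=
  IsUnitary R U ∧ IsUnitary Sᵐᵒᵖ U ∧ SatisfiesI_II R S U ∧ SatisfiesIII_IV R S U

end bimod

section cats

variable (R : Type u) [NonUnitalRing R]

/-- The category of finitely generated unitary left `R`-modules. -/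
abbrev FGMod := CategoryTheory.ObjectProperty.FullSubcategory (fun M : UMod.{u, u} R => IsFG R M.carrier)

/-- The category of finitely generated injective unitary left `R`-modules. -/
abbrev InjFGMod := CategoryTheory.ObjectProperty.FullSubcategory
  (fun M : UMod.{u, u} R => IsFG R M.carrier ∧ CategoryTheory.Injective M)

/-- The category of finitely generated projective unitary left `R`-modules. -/
abbrev ProjFGMod := CategoryTheory.ObjectProperty.FullSubcategory
  (fun M : UMod.{u, u} R => IsFG R M.carrier ∧ CategoryTheory.Projective M)

/-- There is a duality (an additive contravariant equivalence) between the
categories of finitely generated unitary left `R`-modules and finitely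
generated unitary right `S`-modules. -/
def ExistsFGDuality (R S : Type u) [NonUnitalRing R] [NonUnitalRing S] : Prop :=
  ∃ F : (FGMod R)ᵒᵖ ⥤ FGMod Sᵐᵒᵖ, F.Additive ∧ F.IsEquivalence

/-- Bundled ring with local units. -/
structure RingLU : Type (u + 1) where
  carrier : Type u
  [ring : NonUnitalRing carrier]
  [lu : HasLocalUnits carrier]

attribute [instance] RingLU.ring RingLU.lu

/-- A ring with local units is left Morita if there is a ring `R'` with local
units and a duality from finitely generated unitary left `R`-modules to
finitely generated unitary right `R'`-modules. -/
def IsLeftMorita : Prop :=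
  ∃ R' : RingLU.{u}, ExistsFGDuality R R'.carrier

/-- `R` is left locally finite: every finitely generated unitary left
`R`-module has finite length (equivalently, the lengths of chains of
submodules of such a module are bounded). -/
def IsLeftLocallyFinite : Prop :=
  ∀ (M : Type u) [AddCommGroup M] [LMod R M], IsUnitary R M → IsFG R M →
    ∃ n : ℕ, ∀ c : Fin (n + 1) → AddSubgroup M,
      (∀ i (r : R) x, x ∈ c i → r • x ∈ c i) →
      ¬(∀ i : Fin n, c i.castSucc < c i.succ)

/-- `R` is left locally noetherian: every finitely generated unitary left
`R`-module is noetherian. -/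
def IsLeftLocallyNoetherian : Prop :=
  ∀ (M : Type u) [AddCommGroup M] [LMod R M], IsUnitary R M → IsFG R M →
    ∀ c : ℕ → AddSubgroup M, (∀ i (r : R) x, x ∈ c i → r • x ∈ c i) →
      (∀ i, c i ≤ c (i + 1)) → ∃ n, ∀ m, n ≤ m → c m = c n

end cats

section principal

variable (R : Type u) [NonUnitalRing R]

/-- The principal left ideal `Re` of a non-unital ring, for an element `e`. -/
def principalLeft (e : R) : AddSubgroup R where
  carrier := {y : R | ∃ r : R, y = r * e}
  add_mem' := by
    rintro a b ⟨r, hr⟩ ⟨s, hs⟩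
    exact ⟨r + s, by rw [hr, hs, add_mul]⟩
  zero_mem' := ⟨0, by rw [zero_mul]⟩
  neg_mem' := by
    rintro a ⟨r, hr⟩
    exact ⟨-r, by rw [hr, neg_mul]⟩

instance (e : R) : LMod R ↥(principalLeft R e) where
  smul r y := ⟨r * y.1, by obtain ⟨s, hs⟩ := y.2; exact ⟨r * s, by rw [hs, mul_assoc]⟩⟩
  smul_add' r m n := Subtype.ext (mul_add r m.1 n.1)
  add_smul' r s m := Subtype.ext (add_mul r s m.1)
  mul_smul' r s m := Subtype.ext (mul_assoc r s m.1)

/-- The principal right ideal `fS` of a non-unital ring, as a right module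
(left module over the opposite ring). -/
def principalRight (f : R) : AddSubgroup R where
  carrier := {y : R | ∃ s : R, y = f * s}
  add_mem' := by
    rintro a b ⟨r, hr⟩ ⟨s, hs⟩
    exact ⟨r + s, by rw [hr, hs, mul_add]⟩
  zero_mem' := ⟨0, by rw [mul_zero]⟩
  neg_mem' := by
    rintro a ⟨r, hr⟩
    exact ⟨-r, by rw [hr, mul_neg]⟩

instance (f : R) : LMod Rᵐᵒᵖ ↥(principalRight R f) where
  smul s y := ⟨y.1 * s.unop, by
    obtain ⟨t, ht⟩ := y.2; exact ⟨t * s.unop, by rw [ht, mul_assoc]⟩⟩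
  smul_add' s m n := Subtype.ext (add_mul m.1 n.1 s.unop)
  add_smul' s t m := Subtype.ext (mul_add m.1 s.unop t.unop)
  mul_smul' s t m := Subtype.ext (mul_assoc m.1 t.unop s.unop).symm

end principal

section restr

variable (R S : Type u) [NonUnitalRing R] [NonUnitalRing S] [HasLocalUnits R] [HasLocalUnits S]
variable (U : Type u) [AddCommGroup U] [LMod R U] [LMod Sᵐᵒᵖ U] [SMulCommClass R Sᵐᵒᵖ U]
  [SMulCommClass Sᵐᵒᵖ R U]

/-- The restriction of the contravariant functor `Hom_R(−,U)S` to finitely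
generated modules, given that it preserves finite generation. -/
def dualLRestr (hFG : ∀ X : UMod.{u, u} R, IsFG R X.carrier →
    IsFG Sᵐᵒᵖ ((dualL R S U).obj (Opposite.op X)).carrier) :
    (FGMod R)ᵒᵖ ⥤ FGMod Sᵐᵒᵖ :=
  CategoryTheory.ObjectProperty.lift _
    ((CategoryTheory.ObjectProperty.ι _).op ⋙ dualL R S U)
    (fun X => hFG X.unop.obj X.unop.property)

/-- The restriction of the contravariant functor `RHom_S(−,U)` to finitely
generated modules, given that it preserves finite generation. -/
def dualRRestr (hFG : ∀ Y : UMod.{u, u} Sᵐᵒᵖ, IsFG Sᵐᵒᵖ Y.carrier →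
    IsFG R ((dualR R S U).obj (Opposite.op Y)).carrier) :
    (FGMod Sᵐᵒᵖ)ᵒᵖ ⥤ FGMod R :=
  CategoryTheory.ObjectProperty.lift _
    ((CategoryTheory.ObjectProperty.ι _).op ⋙ dualR R S U)
    (fun Y => hFG Y.unop.obj Y.unop.property)

end restr
/-! ### Direct sums of modules over non-unital rings -/

section dfinsupp

variable {R : Type u} [NonUnitalRing R] {ι : Type v} {β : ι → Type w}
  [∀ i, AddCommGroup (β i)] [∀ i, LMod R (β i)]

/-- Pointwise scalar action on a direct sum. -/
def dfinsuppSMul (r : R) (f : Π₀ i, β i) : Π₀ i, β i :=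
  f.mapRange (fun _ x => r • x) (fun _ => LMod.smul_zero' r)

theorem dfinsuppSMul_apply (r : R) (f : Π₀ i, β i) (i : ι) :
    dfinsuppSMul r f i = r • f i := DFinsupp.mapRange_apply _ _ f i

instance DFinsupp.instLMod : LMod R (Π₀ i, β i) where
  smul := dfinsuppSMul
  smul_add' r f g := by
    ext i
    show dfinsuppSMul r (f + g) i = (dfinsuppSMul r f + dfinsuppSMul r g) i
    rw [DFinsupp.add_apply, dfinsuppSMul_apply, dfinsuppSMul_apply, dfinsuppSMul_apply,
      DFinsupp.add_apply]
    exact LMod.smul_add' r (f i) (g i)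
  add_smul' r s f := by
    ext i
    show dfinsuppSMul (r + s) f i = (dfinsuppSMul r f + dfinsuppSMul s f) i
    rw [DFinsupp.add_apply, dfinsuppSMul_apply, dfinsuppSMul_apply, dfinsuppSMul_apply]
    exact LMod.add_smul' r s (f i)
  mul_smul' r s f := by
    ext i
    show dfinsuppSMul (r * s) f i = dfinsuppSMul r (dfinsuppSMul s f) i
    rw [dfinsuppSMul_apply, dfinsuppSMul_apply, dfinsuppSMul_apply]
    exact LMod.mul_smul' r s (f i)

@[simp] theorem DFinsupp.lmod_smul_apply (r : R) (f : Π₀ i, β i) (i : ι) :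
    (r • f) i = r • f i := dfinsuppSMul_apply r f i

end dfinsupp
/-! ### Miscellaneous helpers: submodule stability, `Pf`, traces, sums -/

section extra

variable {R : Type u} [NonUnitalRing R] {M : Type v} [AddCommGroup M] [LMod R M]

theorem closure_smul_stable {s : Set M}
    (h : ∀ (r : R) (x : M), x ∈ s → r • x ∈ AddSubgroup.closure s) (r : R) {x : M}
    (hx : x ∈ AddSubgroup.closure s) : r • x ∈ AddSubgroup.closure s := by
  induction hx using AddSubgroup.closure_induction with
  | mem y hy => exact h r y hy
  | zero => rw [LMod.smul_zero']; exact AddSubgroup.zero_mem _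
  | add y z hy hz ihy ihz => rw [LMod.smul_add']; exact AddSubgroup.add_mem _ ihy ihz
  | neg y hy ihy => rw [LMod.smul_neg']; exact AddSubgroup.neg_mem _ ihy

end extra

section pe

variable (R S : Type u) [NonUnitalRing R] [NonUnitalRing S]
variable (P : Type u) [AddCommGroup P] [LMod R P] [LMod Sᵐᵒᵖ P] [SMulCommClass R Sᵐᵒᵖ P]

/-- The submodule `Pf = {x·f | x ∈ P}` of `P`, for `f ∈ S`. -/
def peSub (f : S) : AddSubgroup P where
  carrier := Set.range (fun x : P => (op f : Sᵐᵒᵖ) • x)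
  add_mem' := by
    rintro a b ⟨x, rfl⟩ ⟨y, rfl⟩
    exact ⟨x + y, LMod.smul_add' (op f) x y⟩
  zero_mem' := ⟨0, LMod.smul_zero' _⟩
  neg_mem' := by
    rintro a ⟨x, rfl⟩
    exact ⟨-x, LMod.smul_neg' (op f) x⟩

instance (f : S) : LMod R ↥(peSub S P f) where
  smul r y := ⟨r • y.1, by
    obtain ⟨x, hx⟩ := y.2
    exact ⟨r • x, by rw [← hx, smul_comm]⟩⟩
  smul_add' r m n := Subtype.ext (LMod.smul_add' r m.1 n.1)
  add_smul' r s m := Subtype.ext (LMod.add_smul' r s m.1)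
  mul_smul' r s m := Subtype.ext (LMod.mul_smul' r s m.1)

variable {R S P} in
theorem sTrSub_smul_stable {M : Type u} [AddCommGroup M] [LMod R M] (r : R) {m : M}
    (hm : m ∈ sTrSub R S P M) : r • m ∈ sTrSub R S P M := by
  refine closure_smul_stable (fun r' x hx => ?_) r hm
  obtain ⟨g, hg, y, rfl⟩ := hx
  exact AddSubgroup.subset_closure ⟨g, hg, r' • y, (g.2.map_smul r' y).symm⟩

instance (M : Type u) [AddCommGroup M] [LMod R M] : LMod R ↥(sTrSub R S P M) where
  smul r y := ⟨r • y.1, sTrSub_smul_stable r y.2⟩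
  smul_add' r m n := Subtype.ext (LMod.smul_add' r m.1 n.1)
  add_smul' r s m := Subtype.ext (LMod.add_smul' r s m.1)
  mul_smul' r s m := Subtype.ext (LMod.mul_smul' r s m.1)

end pe

section sum

/-- Summation over a direct sum against a family of additive maps
(the canonical map `⊕_I M_i → N`). -/
noncomputable def dfinsuppSum {ι : Type u} {β : ι → Type v} [∀ i, AddCommGroup (β i)]
    {γ : Type w} [AddCommGroup γ] (f : ∀ i, β i →+ γ) (x : Π₀ i, β i) : γ :=
  letI := Classical.decEq ι
  DFinsupp.sumAddHom f x

end sum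

/-!
For an idempotent `f ∈ S` the summand `Pf` is finitely generated, hence contained in the image
of a single finitely generated projective `P_i` of the split direct system. Composing a dual basis
of `P_i` with the retraction `P → P_i` given by the splittings yields `β_k ∈ G_P` and `p_k ∈ P`
with `x·f = Σ_k (x)β_k · p_k`. Every element of a module `S·Hom_R(P, N)` is fixed by such an `f`,
so it is determined by its values at the `p_k`: this makes `SHom_R(P, γ_M)` injective, and
`δ ↦ Σ_k (β_k)((p_k)δ)` is a preimage. Checking the latter uses that `x ↦ (x)β · y` belongs to `S`
for `β ∈ G_P` and `y ∈ P`, which is where `S·End_R(P) = S` enters.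
-/

section basics

variable {C : Type u} [NonUnitalRing C]

theorem map_sum_of_map_add {M : Type v} {N : Type w} [AddCommGroup M] [AddCommGroup N]
    {f : M → N} (hf : ∀ a b, f (a + b) = f a + f b) {κ : Type*} (t : Finset κ) (g : κ → M) :
    f (∑ k ∈ t, g k) = ∑ k ∈ t, f (g k) :=
  map_sum (AddMonoidHom.mk' f hf) g t

theorem LMod.smul_sum' {X : Type v} [AddCommGroup X] [LMod C X] (c : C) {κ : Type*}
    (t : Finset κ) (g : κ → X) : c • ∑ k ∈ t, g k = ∑ k ∈ t, c • g k :=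
  map_sum_of_map_add (LMod.smul_add' c) t g

theorem LMod.smul_eq_of_mul_eq {X : Type v} [AddCommGroup X] [LMod C X] {e g : C} {x : X}
    (hge : g * e = e) (hx : e • x = x) : g • x = x := by
  rw [← hx, ← LMod.mul_smul', hge]

theorem exists_idempotent_smul_eq [HasLocalUnits C] {X : Type v} [AddCommGroup X] [LMod C X]
    {x : X} (hx : x ∈ umax C X) : ∃ e : C, e * e = e ∧ e • x = x := by
  classical
  induction hx using AddSubgroup.closure_induction with
  | mem y hy =>
    obtain ⟨c, z, rfl⟩ := hy
    obtain ⟨e, he, hc⟩ := HasLocalUnits.exists_unit {c}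
    exact ⟨e, he, by rw [← LMod.mul_smul', (hc c (Finset.mem_singleton_self c)).1]⟩
  | zero =>
    obtain ⟨e, he, -⟩ := HasLocalUnits.exists_unit (∅ : Finset C)
    exact ⟨e, he, LMod.smul_zero' e⟩
  | add y z _ _ ihy ihz =>
    obtain ⟨e, -, hey⟩ := ihy
    obtain ⟨f, -, hfz⟩ := ihz
    obtain ⟨g, hg, hgu⟩ := HasLocalUnits.exists_unit {e, f}
    exact ⟨g, hg, by rw [LMod.smul_add', LMod.smul_eq_of_mul_eq (hgu e (by simp)).1 hey,
      LMod.smul_eq_of_mul_eq (hgu f (by simp)).1 hfz]⟩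
  | neg y _ ihy =>
    obtain ⟨e, he, hey⟩ := ihy
    exact ⟨e, he, by rw [LMod.smul_neg', hey]⟩

end basics

namespace LinMap

variable {R : Type u} [NonUnitalRing R] {M : Type v} {N : Type w} {K : Type*}
  [AddCommGroup M] [AddCommGroup N] [AddCommGroup K] [LMod R M] [LMod R N] [LMod R K]

def toAddMonoidHom (f : LinMap R M N) : M →+ N :=
  AddMonoidHom.mk' f.1 f.2.map_add

theorem map_sub (f : LinMap R M N) (a b : M) : f.1 (a - b) = f.1 a - f.1 b :=
  _root_.map_sub f.toAddMonoidHom a b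

theorem map_sum (f : LinMap R M N) {κ : Type*} (t : Finset κ) (g : κ → M) :
    f.1 (∑ k ∈ t, g k) = ∑ k ∈ t, f.1 (g k) :=
  map_sum_of_map_add f.2.map_add t g

def comp (g : LinMap R N K) (f : LinMap R M N) : LinMap R M K :=
  ⟨fun x => g.1 (f.1 x),
    ⟨fun x y => by rw [f.2.map_add, g.2.map_add], fun r x => by rw [f.2.map_smul, g.2.map_smul]⟩⟩

@[simp] theorem comp_apply (g : LinMap R N K) (f : LinMap R M N) (x : M) :
    (g.comp f).1 x = g.1 (f.1 x) := rfl

theorem lspan_le_range (f : LinMap R M N) {X : Set N} (hX : X ⊆ Set.range f.1) :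
    lspan R X ≤ f.toAddMonoidHom.range := by
  refine (AddSubgroup.closure_le _).mpr ?_
  rintro a (ha | ⟨r, y, hy, rfl⟩)
  · exact hX ha
  · obtain ⟨w, rfl⟩ := hX hy
    exact ⟨r • w, f.2.map_smul r w⟩

end LinMap

namespace UMod

variable {R : Type u} [NonUnitalRing R] {M N : UMod.{u, v} R}

theorem epi_of_surjective (g : M ⟶ N) (hg : Function.Surjective g.1) : Epi g :=
  ⟨fun {_} a b hab => LinMap.ext (funext fun y => by
    obtain ⟨x, rfl⟩ := hg y
    exact congrArg (fun t => t.1 x) hab)⟩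

theorem isIso_of_bijective (g : M ⟶ N) (hg : Function.Bijective g.1) : IsIso g := by
  let e := Equiv.ofBijective _ hg
  have he : ∀ y, g.1 (e.symm y) = y := e.apply_symm_apply
  refine ⟨⟨e.symm, ⟨fun a b => hg.1 ?_, fun r a => hg.1 ?_⟩⟩,
    LinMap.ext (funext e.symm_apply_apply), LinMap.ext (funext he)⟩
  · rw [he, g.2.map_add, he, he]
  · rw [he, g.2.map_smul, he]

end UMod

theorem SplitSystem.split_map_of_rel {R : Type u} [NonUnitalRing R] {ι : Type w}
    {rel : ι → ι → Prop} (D : SplitSystem.{u, v} R ι rel) {i j k : ι}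
    (hij : rel i j) (hjk : rel j k) (hik : rel i k) (y : (D.obj j).carrier) :
    (D.split hik).1 ((D.map hjk).1 y) = (D.split hij).1 y := by
  rw [← D.split_split hij hjk hik, D.split_map]

namespace LimitCocone

variable {R : Type u} [NonUnitalRing R] {ι : Type w} {rel : ι → ι → Prop}
  {D : SplitSystem.{u, v} R ι rel} {P : Type v} [AddCommGroup P] [LMod R P]
  (c : LimitCocone R D P)

theorem exists_finset_subset_range [Nonempty ι] (hdir : ∀ i j, ∃ k, rel i k ∧ rel j k)
    (htrans : ∀ {i j k}, rel i j → rel j k → rel i k) (t : Finset P) :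
    ∃ i, (↑t : Set P) ⊆ Set.range (c.incl i).1 := by
  classical
  have : IsTrans ι rel := ⟨fun _ _ _ => htrans⟩
  obtain ⟨i, hi⟩ := Directed.finset_le (f := id) hdir (t.image fun q => (c.exhaustive q).choose)
  refine ⟨i, fun q hq => ?_⟩
  obtain ⟨y, hy⟩ := (c.exhaustive q).choose_spec
  have hrel : rel (c.exhaustive q).choose i := hi _ (Finset.mem_image_of_mem _ hq)
  exact ⟨(D.map hrel).1 y, by rw [c.compat hrel, hy]⟩

theorem exists_incl_eq_of_rel (hdir : ∀ i j, ∃ k, rel i k ∧ rel j k) (i : ι) (x : P) :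
    ∃ j, ∃ _ : rel i j, ∃ y : (D.obj j).carrier, (c.incl j).1 y = x := by
  obtain ⟨j₀, y₀, hy₀⟩ := c.exhaustive x
  obtain ⟨k, hik, hj₀k⟩ := hdir i j₀
  exact ⟨k, hik, (D.map hj₀k).1 y₀, by rw [c.compat hj₀k, hy₀]⟩

theorem split_eq_of_incl_eq (hdir : ∀ i j, ∃ k, rel i k ∧ rel j k)
    (htrans : ∀ {i j k}, rel i j → rel j k → rel i k)
    {i j k : ι} (hij : rel i j) (hik : rel i k) {y : (D.obj j).carrier}
    {z : (D.obj k).carrier} (h : (c.incl j).1 y = (c.incl k).1 z) :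
    (D.split hij).1 y = (D.split hik).1 z := by
  obtain ⟨l, hjl, hkl⟩ := hdir j k
  have h0 : (c.incl l).1 ((D.map hjl).1 y - (D.map hkl).1 z) = 0 := by
    rw [LinMap.map_sub, c.compat, c.compat, h, sub_self]
  obtain ⟨o, hlo, hzero⟩ := c.eventually_zero l _ h0
  have hjo := htrans hjl hlo
  have hko := htrans hkl hlo
  rw [LinMap.map_sub, sub_eq_zero, D.map_map hjl hlo hjo, D.map_map hkl hlo hko] at hzero
  rw [← D.split_map_of_rel hij hjo (htrans hij hjo), hzero,
    D.split_map_of_rel hik hko (htrans hij hjo)]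

/-- Well defined because the splittings are compatible with the transition maps. -/
noncomputable def retractionFun (hdir : ∀ i j, ∃ k, rel i k ∧ rel j k) (i : ι) (x : P) : (D.obj i).carrier :=
  (D.split (c.exists_incl_eq_of_rel hdir i x).choose_spec.choose).1
    (c.exists_incl_eq_of_rel hdir i x).choose_spec.choose_spec.choose

theorem retractionFun_eq (hdir : ∀ i j, ∃ k, rel i k ∧ rel j k)
    (htrans : ∀ {i j k}, rel i j → rel j k → rel i k) {i j : ι}
    (hij : rel i j) {y : (D.obj j).carrier} {x : P} (h : (c.incl j).1 y = x) :
    c.retractionFun hdir i x = (D.split hij).1 y :=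
  c.split_eq_of_incl_eq hdir htrans _ hij
    ((c.exists_incl_eq_of_rel hdir i x).choose_spec.choose_spec.choose_spec.trans h.symm)

noncomputable def retraction (hdir : ∀ i j, ∃ k, rel i k ∧ rel j k)
    (htrans : ∀ {i j k}, rel i j → rel j k → rel i k) (i : ι) :
    LinMap R P (D.obj i).carrier :=
  ⟨c.retractionFun hdir i,
    ⟨fun x x' => by
      obtain ⟨j, hij, y, rfl⟩ := c.exists_incl_eq_of_rel hdir i x
      obtain ⟨j', -, y', rfl⟩ := c.exists_incl_eq_of_rel hdir i x'
      obtain ⟨k, hjk, hj'k⟩ := hdir j j'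
      have hik := htrans hij hjk
      rw [← c.compat hjk y, ← c.compat hj'k y', ← (c.incl k).2.map_add,
        c.retractionFun_eq hdir htrans hik rfl, c.retractionFun_eq hdir htrans hik rfl,
        c.retractionFun_eq hdir htrans hik rfl, (D.split hik).2.map_add],
     fun r x => by
      obtain ⟨j, hij, y, rfl⟩ := c.exists_incl_eq_of_rel hdir i x
      rw [← (c.incl j).2.map_smul, c.retractionFun_eq hdir htrans hij rfl,
        c.retractionFun_eq hdir htrans hij rfl, (D.split hij).2.map_smul]⟩⟩

theorem retraction_incl (hdir : ∀ i j, ∃ k, rel i k ∧ rel j k)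
    (htrans : ∀ {i j k}, rel i j → rel j k → rel i k)
    (hrefl : ∀ i, rel i i) (i : ι) (w : (D.obj i).carrier) :
    (c.retraction hdir htrans i).1 ((c.incl i).1 w) = w := by
  have h := D.split_map (hrefl i) w
  rw [D.map_self] at h
  exact (c.retractionFun_eq hdir htrans (hrefl i) rfl).trans h

end LimitCocone

section free

variable (R : Type u) [NonUnitalRing R]

instance Pi.instLModFinSelf (n : ℕ) : LMod R (Fin n → R) where
  smul r g := fun k => r * g k
  smul_add' r g g' := funext fun k => mul_add r (g k) (g' k)
  add_smul' r r' g := funext fun k => add_mul r r' (g k)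
  mul_smul' r r' g := funext fun k => mul_assoc r r' (g k)

theorem isUnitary_fin_fun [HasLocalUnits R] (n : ℕ) : IsUnitary R (Fin n → R) := by
  classical
  intro g
  obtain ⟨e, -, he⟩ := HasLocalUnits.exists_unit (Finset.univ.image g)
  have hg : (e • g : Fin n → R) = g :=
    funext fun k => (he (g k) (Finset.mem_image_of_mem g (Finset.mem_univ k))).1
  exact hg ▸ AddSubgroup.subset_closure ⟨e, g, rfl⟩

def freeUMod [HasLocalUnits R] (n : ℕ) : UMod.{u, u} R :=
  ⟨Fin n → R, isUnitary_fin_fun R n⟩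

variable {R} {M : Type u} [AddCommGroup M] [LMod R M]

def linearCombination {n : ℕ} (m : Fin n → M) : LinMap R (Fin n → R) M :=
  ⟨fun g => ∑ k, g k • m k,
    ⟨fun g g' => by simp only [Pi.add_apply, LMod.add_smul', Finset.sum_add_distrib],
     fun r g => by
      show ∑ k, (r * g k) • m k = r • ∑ k, g k • m k
      simp only [LMod.smul_sum', LMod.mul_smul']⟩⟩

theorem linearCombination_single {n : ℕ} (m : Fin n → M) (k : Fin n) (r : R) :
    (linearCombination m).1 (Pi.single k r) = r • m k := by
  show ∑ l, (Pi.single k r : Fin n → R) l • m l = r • m k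
  rw [Finset.sum_eq_single k (fun l _ hl => by rw [Pi.single_eq_of_ne hl, LMod.zero_smul'])
    (by simp), Pi.single_eq_same]

theorem linearCombination_surjective [HasLocalUnits R] (hM : IsUnitary R M) {n : ℕ}
    {m : Fin n → M} {X : Set M} (hX : X ⊆ Set.range m) (hgen : ∀ w, w ∈ lspan R X) :
    Function.Surjective (linearCombination (R := R) m).1 := by
  have hm : Set.range m ⊆ Set.range (linearCombination (R := R) m).1 := by
    rintro _ ⟨k, rfl⟩
    obtain ⟨e, -, he⟩ := exists_idempotent_smul_eq (hM (m k))
    exact ⟨Pi.single k e, by rw [linearCombination_single, he]⟩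
  exact fun w => (linearCombination m).lspan_le_range (hX.trans hm) (hgen w)

theorem exists_dual_basis_of_projective [HasLocalUnits R] (Q : UMod.{u, u} R)
    (hQ : IsFG R Q.carrier) [Projective Q] :
    ∃ (n : ℕ) (m : Fin n → Q.carrier) (lam : Fin n → LinMap R Q.carrier R),
      ∀ w, w = ∑ k, (lam k).1 w • m k := by
  obtain ⟨s, hs⟩ := hQ
  let m : Fin s.card → Q.carrier := fun k => s.equivFin.symm k
  have hsm : (↑s : Set Q.carrier) ⊆ Set.range m := fun x hx => ⟨s.equivFin ⟨x, hx⟩, by simp [m]⟩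
  let π : freeUMod R s.card ⟶ Q := linearCombination m
  have : Epi π := UMod.epi_of_surjective π (linearCombination_surjective Q.unitary hsm hs)
  let σ := Projective.factorThru (𝟙 Q) π
  have hσ : ∀ w, π.1 (σ.1 w) = w := fun w =>
    congrArg (fun t : Q ⟶ Q => t.1 w) (Projective.factorThru_comp (𝟙 Q) π)
  exact ⟨s.card, m, fun k => ⟨fun w => σ.1 w k,
    ⟨fun a b => congrFun (σ.2.map_add a b) k, fun r a => congrFun (σ.2.map_smul r a) k⟩⟩,
    fun w => (hσ w).symm⟩

end free

section gamma

variable (R S : Type u) [NonUnitalRing R] [NonUnitalRing S]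
  (P : Type u) [AddCommGroup P] [LMod R P] [LMod Sᵐᵒᵖ P] [SMulCommClass R Sᵐᵒᵖ P]

theorem isLHom_gammaFun (N : Type u) [AddCommGroup N] [LMod R N] :
    IsLHom R (gammaFun R S P N) where
  map_add m m' := LinMap.ext (funext fun β => Subtype.ext (LinMap.ext (funext fun x =>
    LMod.smul_add' (β.1.1 x) m m')))
  map_smul r m := LinMap.ext (funext fun β => Subtype.ext (LinMap.ext (funext fun x =>
    (LMod.mul_smul' (β.1.1 x) r m).symm)))

def gamma [HasLocalUnits R] [HasLocalUnits S] :
    𝟭 (UMod.{u, u} R) ⟶ sHomF R S P ⋙ rHomGF R S P where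
  app M := ⟨fun m => ⟨gammaFun R S P M.carrier m,
      umax_mapsTo _ (isLHom_gammaFun R S P _).map_add (isLHom_gammaFun R S P _).map_smul
        (M.unitary m)⟩,
    ⟨fun m m' => Subtype.ext ((isLHom_gammaFun R S P _).map_add m m'),
     fun r m => Subtype.ext ((isLHom_gammaFun R S P _).map_smul r m)⟩⟩
  naturality M N h := LinMap.ext (funext fun m => Subtype.ext (LinMap.ext (funext fun β =>
    Subtype.ext (LinMap.ext (funext fun y => (h.2.map_smul (β.1.1 y) m).symm)))))

end gamma

section subringOfEnd

variable {R : Type u} [NonUnitalRing R] {P : Type u} [AddCommGroup P] [LMod R P]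
  {S : NonUnitalSubring (LinMap R P P)} [LMod (↥S)ᵐᵒᵖ P] [SMulCommClass R (↥S)ᵐᵒᵖ P]

theorem exists_dual_basis_of_idempotent [HasLocalUnits R] (hlp : IsLocallyProjective R P)
    (hact : ∀ (s : ↥S) (x : P), op s • x = (s : LinMap R P P).1 x)
    (hfg : ∀ f : LinMap R P P, f ∈ S → f * f = f → IsFGSet R (Set.range f.1))
    (f : ↥S) (hf : f * f = f) :
    ∃ (n : ℕ) (β : Fin n → LinMap R P R) (p : Fin n → P),
      (∀ k, β k ∈ umax ↥S (LinMap R P R)) ∧ ∀ x, op f • x = ∑ k, (β k).1 x • p k := by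
  obtain ⟨t, -, htgen⟩ := hfg f f.2 (congrArg Subtype.val hf)
  obtain ⟨ι, rel, hrefl, htrans, hne, hdir, D, c, hD⟩ := hlp
  obtain ⟨i, hi⟩ := c.exists_finset_subset_range hdir htrans t
  have hPf : ∀ x, op f • x ∈ (c.incl i).toAddMonoidHom.range := fun x =>
    (c.incl i).lspan_le_range hi (htgen _ ⟨x, (hact f x).symm⟩)
  have := (hD i).2
  obtain ⟨n, m, lam, hdb⟩ := exists_dual_basis_of_projective (D.obj i) (hD i).1
  let ret := c.retraction hdir htrans i
  refine ⟨n, fun k => f • (lam k).comp ret, fun k => (c.incl i).1 (m k),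
    fun k => smul_mem_umax _ _, fun x => ?_⟩
  obtain ⟨w, hw⟩ : ∃ w, (c.incl i).1 w = op f • x := hPf x
  calc op f • x = (c.incl i).1 w := hw.symm
    _ = (c.incl i).1 (∑ k, (lam k).1 w • m k) := by rw [← hdb]
    _ = ∑ k, (lam k).1 w • (c.incl i).1 (m k) := by
      rw [LinMap.map_sum]
      simp only [(c.incl i).2.map_smul]
    _ = ∑ k, (f • (lam k).comp ret).1 x • (c.incl i).1 (m k) := by
      simp only [LinMap.pre_smul_apply, LinMap.comp_apply, ret, ← hw,
        c.retraction_incl hdir htrans hrefl]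

theorem mem_of_mem_umax (hact : ∀ (s : ↥S) (x : P), op s • x = (s : LinMap R P P).1 x)
    (hSEnd : ((AddSubgroup.closure
        {h : LinMap R P P | ∃ s ∈ S, ∃ g : LinMap R P P, h = s * g} :
        AddSubgroup (LinMap R P P)) : Set (LinMap R P P)) = ↑S)
    {g : LinMap R P P} (hg : g ∈ umax ↥S (LinMap R P P)) : g ∈ S := by
  rw [← SetLike.mem_coe, ← hSEnd]
  refine AddSubgroup.closure_mono ?_ hg
  rintro _ ⟨s, g, rfl⟩
  exact ⟨s, s.2, g, LinMap.ext (funext fun x => by rw [LinMap.pre_smul_apply, hact]; rfl)⟩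

theorem smul_eq_op_smul (hact : ∀ (s : ↥S) (x : P), op s • x = (s : LinMap R P P).1 x)
    (x : P) (B β : GP R ↥S P) (hB : gammaInner x B.1 ∈ S) :
    (⟨gammaInner x B.1, hB⟩ : ↥S) • β = op (β.1.1 x) • B :=
  Subtype.ext (LinMap.ext (funext fun z => by
    show β.1.1 (op _ • z) = B.1.1 z * β.1.1 x
    rw [hact]
    exact β.1.2.map_smul (B.1.1 z) x))

theorem apply_op_smul_apply (hact : ∀ (s : ↥S) (x : P), op s • x = (s : LinMap R P P).1 x)
    (hSEnd : ((AddSubgroup.closure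
        {h : LinMap R P P | ∃ s ∈ S, ∃ g : LinMap R P P, h = s * g} :
        AddSubgroup (LinMap R P P)) : Set (LinMap R P P)) = ↑S)
    {N : Type u} [AddCommGroup N] [LMod R N] (F : LinMap ↥S (GP R ↥S P) (SHom R ↥S P N))
    (β B : GP R ↥S P) (x y : P) :
    (F.1 (op (β.1.1 x) • B)).1.1 y = B.1.1 y • (F.1 β).1.1 x := by
  have hB := mem_of_mem_umax hact hSEnd (gammaInner_mem x B.2)
  rw [← smul_eq_op_smul hact x B β hB, F.2.map_smul]
  show (F.1 β).1.1 (op _ • y) = _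
  rw [hact]
  exact (F.1 β).1.2.map_smul (B.1.1 y) x

theorem apply_eq_sum_of_dual_basis {N : Type u} [AddCommGroup N] [LMod R N] {f : ↥S} {n : ℕ}
    {β : Fin n → LinMap R P R} {p : Fin n → P} (hdb : ∀ x, op f • x = ∑ k, (β k).1 x • p k)
    {α : LinMap R P N} (hα : f • α = α) (x : P) :
    α.1 x = ∑ k, (β k).1 x • α.1 (p k) := by
  calc α.1 x = (f • α).1 x := by rw [hα]
    _ = ∑ k, (β k).1 x • α.1 (p k) := by
      rw [LinMap.pre_smul_apply, hdb, LinMap.map_sum]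
      simp only [α.2.map_smul]

variable [HasLocalUnits R] [HasLocalUnits ↥S]

theorem sHomF_map_gamma_injective (hlp : IsLocallyProjective R P)
    (hact : ∀ (s : ↥S) (x : P), op s • x = (s : LinMap R P P).1 x)
    (hfg : ∀ f : LinMap R P P, f ∈ S → f * f = f → IsFGSet R (Set.range f.1))
    (M : UMod.{u, u} R) :
    Function.Injective ((sHomF R ↥S P).map ((gamma R ↥S P).app M)).1 := by
  refine (injective_iff_map_eq_zero
    ((sHomF R ↥S P).map ((gamma R ↥S P).app M)).toAddMonoidHom).mpr fun α hα => ?_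
  have hvanish : ∀ x (B : GP R ↥S P) y, B.1.1 y • α.1.1 x = 0 := fun x B y =>
    congrArg (fun t => ((t.1.1 x).1.1 B).1.1 y) hα
  obtain ⟨f, hf, hfα⟩ := exists_idempotent_smul_eq α.2
  obtain ⟨n, β, p, hβ, hdb⟩ := exists_dual_basis_of_idempotent hlp hact hfg f hf
  refine Subtype.ext (LinMap.ext (funext fun x => ?_))
  rw [apply_eq_sum_of_dual_basis hdb hfα x]
  exact Finset.sum_eq_zero fun k _ => hvanish (p k) ⟨β k, hβ k⟩ x

theorem sHomF_map_gamma_surjective (hlp : IsLocallyProjective R P)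
    (hact : ∀ (s : ↥S) (x : P), op s • x = (s : LinMap R P P).1 x)
    (hSEnd : ((AddSubgroup.closure
        {h : LinMap R P P | ∃ s ∈ S, ∃ g : LinMap R P P, h = s * g} :
        AddSubgroup (LinMap R P P)) : Set (LinMap R P P)) = ↑S)
    (hfg : ∀ f : LinMap R P P, f ∈ S → f * f = f → IsFGSet R (Set.range f.1))
    (M : UMod.{u, u} R) :
    Function.Surjective ((sHomF R ↥S P).map ((gamma R ↥S P).app M)).1 := by
  intro δ
  obtain ⟨f, hf, hfδ⟩ := exists_idempotent_smul_eq δ.2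
  obtain ⟨n, β, p, hβ, hdb⟩ := exists_dual_basis_of_idempotent hlp hact hfg f hf
  let A : Fin n → SHom R ↥S P M.carrier := fun k => (δ.1.1 (p k)).1.1 ⟨β k, hβ k⟩
  refine ⟨∑ k, A k, Subtype.ext (LinMap.ext (funext fun x => Subtype.ext (LinMap.ext
    (funext fun B => Subtype.ext (LinMap.ext (funext fun y => ?_))))))⟩
  show B.1.1 y • (∑ k, A k).1.1 x = ((δ.1.1 x).1.1 B).1.1 y
  rw [apply_eq_sum_of_dual_basis hdb hfδ x,
    map_sum_of_map_add (f := fun a : SHom R ↥S P M.carrier => a.1.1 x) (fun _ _ => rfl),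
    map_sum_of_map_add
      (f := fun F : ((sHomF R ↥S P ⋙ rHomGF R ↥S P).obj M).carrier => (F.1.1 B).1.1 y)
      (fun _ _ => rfl), LMod.smul_sum']
  exact Finset.sum_congr rfl fun k _ =>
    (apply_op_smul_apply hact hSEnd (δ.1.1 (p k)).1 ⟨β k, hβ k⟩ B x y).symm

end subringOfEnd
theorem gamma_natural_transformation_general
    (R : Type u) [NonUnitalRing R] [HasLocalUnits R]
    (P : Type u) [AddCommGroup P] [LMod R P]
    (hlp : IsLocallyProjective R P)
    (S : NonUnitalSubring (LinMap R P P)) [HasLocalUnits ↥S]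
    [LMod (↥S)ᵐᵒᵖ P] [SMulCommClass R (↥S)ᵐᵒᵖ P]
    (hact : ∀ (s : ↥S) (x : P), (MulOpposite.op s) • x = (s : LinMap R P P).1 x)
    (hSEnd : ((AddSubgroup.closure
        {h : LinMap R P P | ∃ s ∈ S, ∃ g : LinMap R P P, h = s * g} :
        AddSubgroup (LinMap R P P)) : Set (LinMap R P P)) = ↑S)
    (hfg : ∀ f : LinMap R P P, f ∈ S → f * f = f → IsFGSet R (Set.range f.1)) :
    ∃ γ : CategoryTheory.Functor.id (UMod.{u, u} R) ⟶ sHomF R ↥S P ⋙ rHomGF R ↥S P,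
      -- the components of `γ` are the evaluation maps
      (∀ (M : UMod.{u, u} R) (m : M.carrier),
        ((γ.app M).1 m).1 = gammaFun R ↥S P M.carrier m) ∧
      -- `SHom_R(P, γ_M)` is an isomorphism of `S`-modules for every `M`
      (∀ M : UMod.{u, u} R, Function.Bijective ((sHomF R ↥S P).map (γ.app M)).1) ∧
      -- which determines a functorial isomorphism
      Nonempty (sHomF R ↥S P ≅ (sHomF R ↥S P ⋙ rHomGF R ↥S P) ⋙ sHomF R ↥S P) := by
  have hbij : ∀ M : UMod.{u, u} R,
      Function.Bijective ((sHomF R ↥S P).map ((gamma R ↥S P).app M)).1 := fun M =>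
    ⟨sHomF_map_gamma_injective hlp hact hfg M, sHomF_map_gamma_surjective hlp hact hSEnd hfg M⟩
  have : ∀ M, IsIso ((Functor.whiskerRight (gamma R ↥S P) (sHomF R ↥S P)).app M) := fun M =>
    UMod.isIso_of_bijective _ (hbij M)
  have := NatIso.isIso_of_isIso_app (Functor.whiskerRight (gamma R ↥S P) (sHomF R ↥S P))
  exact ⟨gamma R ↥S P, fun M m => rfl, hbij,
    ⟨asIso (Functor.whiskerRight (gamma R ↥S P) (sHomF R ↥S P))⟩⟩

theorem gamma_natural_transformation
    (R : Type u) [NonUnitalRing R] [HasLocalUnits R]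
    (P : Type u) [AddCommGroup P] [LMod R P]
    (hPu : IsUnitary R P)
    (hlp : IsLocallyProjective R P)
    (S : NonUnitalSubring (LinMap R P P)) [HasLocalUnits ↥S]
    [LMod (↥S)ᵐᵒᵖ P] [SMulCommClass R (↥S)ᵐᵒᵖ P]
    (hact : ∀ (s : ↥S) (x : P), (MulOpposite.op s) • x = (s : LinMap R P P).1 x)
    (hPS : IsUnitary (↥S)ᵐᵒᵖ P)
    (hSEnd : ((AddSubgroup.closure
        {h : LinMap R P P | ∃ s ∈ S, ∃ g : LinMap R P P, h = s * g} :
        AddSubgroup (LinMap R P P)) : Set (LinMap R P P)) = ↑S)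
    (hfg : ∀ f : LinMap R P P, f ∈ S → f * f = f → IsFGSet R (Set.range f.1)) :
    ∃ γ : CategoryTheory.Functor.id (UMod.{u, u} R) ⟶ sHomF R ↥S P ⋙ rHomGF R ↥S P,
      -- the components of `γ` are the evaluation maps
      (∀ (M : UMod.{u, u} R) (m : M.carrier),
        ((γ.app M).1 m).1 = gammaFun R ↥S P M.carrier m) ∧
      -- `SHom_R(P, γ_M)` is an isomorphism of `S`-modules for every `M`
      (∀ M : UMod.{u, u} R, Function.Bijective ((sHomF R ↥S P).map (γ.app M)).1) ∧
      -- which determines a functorial isomorphism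
      Nonempty (sHomF R ↥S P ≅ (sHomF R ↥S P ⋙ rHomGF R ↥S P) ⋙ sHomF R ↥S P) :=
  gamma_natural_transformation_general R P hlp S hact hSEnd hfg
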